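/- On the square grid ℤ², the set D = {(i, i) : 0 ≤ i ≤ n−1} (a diagonal of n ≥ 3 coins) is span-minimal, its span is the full n × n square {0,…,n−1}², and D admits no valid 2-adjacent move that preserves the span; in particular the anti-diagonal {(i, n−1−i) : 0 ≤ i ≤ n−1} has the same span but is not reachable from D. -/

import Mathlib

/-- A valid 2-adjacent move on board `G`: take a token at `q ∈ C`, place it at an
unoccupied `p` adjacent to at least 2 tokens of `C` other than `q`. -/
def ValidMove {P : Type*} [DecidableEq P] (G : SimpleGraph P) (C C' : Finset P) : Prop :=
  ∃ q ∈ C, ∃ p, p ∉ C ∧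
    (∃ a ∈ C.erase q, ∃ b ∈ C.erase q, a ≠ b ∧ G.Adj p a ∧ G.Adj p b) ∧
    C' = insert p (C.erase q)

/-- Reachability by a finite sequence of valid 2-adjacent moves. -/
def Reach {P : Type*} [DecidableEq P] (G : SimpleGraph P) : Finset P → Finset P → Prop :=
  Relation.ReflTransGen (ValidMove G)

/-- The span of a set of positions: the least superset closed under adding any
vertex adjacent to at least 2 vertices of the set. -/
def Span {P : Type*} (G : SimpleGraph P) (C : Set P) : Set P :=
  ⋂₀ {S : Set P | C ⊆ S ∧ ∀ p, (∃ a ∈ S, ∃ b ∈ S, a ≠ b ∧ G.Adj p a ∧ G.Adj p b) → p ∈ S}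


/-- The square grid on ℤ². -/
def Grid : SimpleGraph (ℤ × ℤ) where
  Adj p q := |p.1 - q.1| + |p.2 - q.2| = 1
  symm := ⟨by intro p q h; beta_reduce at h ⊢; rw [abs_sub_comm q.1 p.1, abs_sub_comm q.2 p.2]; exact h⟩
  loopless := ⟨by intro p; simp⟩

/-!
Removing the diagonal coin `(k, k)` leaves coins in the two open quadrants south-west and
north-east of `(k, k)`. Their union is closed under the 2-neighbour rule, since a point adjacent
to both quadrants would have coordinate sum both `< 2k` and `> 2k`; so `(k, k)` is not
regained. A valid move is a removal followed by adding a point already in the span of what is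
left, so no move from the diagonal keeps the span, and hence no sequence of moves reaches another
configuration with the same span, such as the anti-diagonal. Each diagonal fills the square, every
point off it being adjacent to two points one step closer to it.
-/

open Set

section Span

variable {P : Type*} (G : SimpleGraph P)

def SpanClosed (S : Set P) : Prop :=
  ∀ p, (∃ a ∈ S, ∃ b ∈ S, a ≠ b ∧ G.Adj p a ∧ G.Adj p b) → p ∈ S

variable {G}

theorem subset_span (C : Set P) : C ⊆ Span G C :=
  fun _ hx => mem_sInter.2 fun _ hS => hS.1 hx

theorem spanClosed_span (C : Set P) : SpanClosed G (Span G C) := by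
  rintro p ⟨a, ha, b, hb, hab, hpa, hpb⟩
  exact mem_sInter.2 fun S hS =>
    hS.2 p ⟨a, mem_sInter.1 ha S hS, b, mem_sInter.1 hb S hS, hab, hpa, hpb⟩

theorem span_subset_of_spanClosed {C S : Set P} (hCS : C ⊆ S) (hS : SpanClosed G S) :
    Span G C ⊆ S :=
  sInter_subset_of_mem ⟨hCS, hS⟩

theorem span_mono {C C' : Set P} (h : C ⊆ C') : Span G C ⊆ Span G C' :=
  span_subset_of_spanClosed (h.trans (subset_span C')) (spanClosed_span C')

theorem SpanClosed.union {S T : Set P} (hS : SpanClosed G S) (hT : SpanClosed G T)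
    (hST : ∀ p, ∀ a ∈ S, ∀ b ∈ T, G.Adj p a → G.Adj p b → False) :
    SpanClosed G (S ∪ T) := by
  rintro p ⟨a, ha | ha, b, hb | hb, hab, hpa, hpb⟩
  · exact Or.inl (hS p ⟨a, ha, b, hb, hab, hpa, hpb⟩)
  · exact (hST p a ha b hb hpa hpb).elim
  · exact (hST p b hb a ha hpb hpa).elim
  · exact Or.inr (hT p ⟨a, ha, b, hb, hab, hpa, hpb⟩)

variable [DecidableEq P]

theorem ValidMove.exists_span_subset_span_sdiff {C C' : Finset P} (h : ValidMove G C C') :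
    ∃ q ∈ C, Span G ↑C' ⊆ Span G (↑C \ {q}) := by
  obtain ⟨q, hq, p, -, ⟨a, ha, b, hb, hab, hpa, hpb⟩, rfl⟩ := h
  have hrest : ↑(C.erase q) ⊆ Span G (↑C \ {q}) := by
    rw [Finset.coe_erase]
    exact subset_span _
  refine ⟨q, hq, span_subset_of_spanClosed ?_ (spanClosed_span _)⟩
  rw [Finset.coe_insert]
  exact insert_subset (spanClosed_span _ p ⟨a, hrest ha, b, hrest hb, hab, hpa, hpb⟩) hrest

theorem Reach.span_subset {C C' : Finset P} (h : Reach G C C') : Span G ↑C' ⊆ Span G ↑C := by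
  induction h with
  | refl => exact subset_rfl
  | tail _ hmove ih =>
    obtain ⟨q, -, hsub⟩ := hmove.exists_span_subset_span_sdiff
    exact hsub.trans ((span_mono sdiff_subset).trans ih)

theorem ValidMove.not_span_subset {C C' : Finset P} (hmin : ∀ q ∈ C, q ∉ Span G (↑C \ {q}))
    (h : ValidMove G C C') : ¬Span G ↑C ⊆ Span G ↑C' := fun hsub => by
  obtain ⟨q, hq, hq'⟩ := h.exists_span_subset_span_sdiff
  exact hmin q hq (hq' (hsub (subset_span _ hq)))

theorem Reach.eq_of_span_subset {C C' : Finset P} (hmin : ∀ q ∈ C, q ∉ Span G (↑C \ {q}))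
    (h : Reach G C C') (hsub : Span G ↑C ⊆ Span G ↑C') : C = C' := by
  rcases Relation.ReflTransGen.cases_head h with rfl | ⟨c, hmove, hreach⟩
  · rfl
  · exact (hmove.not_span_subset hmin (hsub.trans (Reach.span_subset hreach))).elim

end Span

section Grid

theorem grid_adj_iff {p q : ℤ × ℤ} : Grid.Adj p q ↔
    (p.1 = q.1 ∧ (p.2 = q.2 + 1 ∨ p.2 = q.2 - 1)) ∨
    (p.2 = q.2 ∧ (p.1 = q.1 + 1 ∨ p.1 = q.1 - 1)) := by
  show |p.1 - q.1| + |p.2 - q.2| = 1 ↔ _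
  rcases abs_cases (p.1 - q.1) with ⟨h1, h2⟩ | ⟨h1, h2⟩ <;>
    rcases abs_cases (p.2 - q.2) with ⟨h3, h4⟩ | ⟨h3, h4⟩ <;> omega

theorem spanClosed_prod {s t : Set ℤ} [s.OrdConnected] [t.OrdConnected] :
    SpanClosed Grid (s ×ˢ t) := by
  have between : ∀ {u : Set ℤ} [u.OrdConnected] {x y z : ℤ}, x ∈ u → y ∈ u →
      (z = x ∨ z = y ∨ (x < z ∧ z < y) ∨ (y < z ∧ z < x)) → z ∈ u := by
    rintro u _ x y z hx hy (rfl | rfl | ⟨h1, h2⟩ | ⟨h1, h2⟩)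
    exacts [hx, hy, Set.Icc_subset u hx hy ⟨h1.le, h2.le⟩,
      Set.Icc_subset u hy hx ⟨h1.le, h2.le⟩]
  rintro p ⟨a, ⟨ha1, ha2⟩, b, ⟨hb1, hb2⟩, hab, hpa, hpb⟩
  rw [grid_adj_iff] at hpa hpb
  have hab' : a.1 ≠ b.1 ∨ a.2 ≠ b.2 := by
    by_contra! h
    exact hab (Prod.ext h.1 h.2)
  exact ⟨between ha1 hb1 (by omega), between ha2 hb2 (by omega)⟩

theorem SpanClosed.mem_of_adj_pair {S : Set (ℤ × ℤ)} (hS : SpanClosed Grid S) {x y s t : ℤ}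
    (hs : s = 1 ∨ s = -1) (ht : t = 1 ∨ t = -1)
    (h₁ : (x + s, y) ∈ S) (h₂ : (x, y + t) ∈ S) : (x, y) ∈ S :=
  hS _ ⟨_, h₁, _, h₂, by simp only [ne_eq, Prod.mk.injEq]; omega,
    by rw [grid_adj_iff]; omega, by rw [grid_adj_iff]; omega⟩

theorem SpanClosed.square_subset_of_diag {S : Set (ℤ × ℤ)} (hS : SpanClosed Grid S) {m : ℤ}
    (hdiag : ∀ i ∈ Icc 0 m, (i, i) ∈ S) : Icc 0 m ×ˢ Icc 0 m ⊆ S := by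
  suffices h : ∀ d : ℕ, ∀ x y : ℤ, (x - y).natAbs ≤ d → x ∈ Icc 0 m → y ∈ Icc 0 m →
      (x, y) ∈ S from
    fun ⟨x, y⟩ ⟨hx, hy⟩ => h _ x y le_rfl hx hy
  intro d
  induction d with
  | zero =>
    intro x y hxy hx _
    obtain rfl : x = y := by omega
    exact hdiag x hx
  | succ d ih =>
    rintro x y hxy ⟨hx0, hxm⟩ ⟨hy0, hym⟩
    rcases lt_trichotomy x y with h | rfl | h
    · exact hS.mem_of_adj_pair (Or.inl rfl) (Or.inr rfl)
        (ih _ _ (by omega) ⟨by omega, by omega⟩ ⟨by omega, by omega⟩)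
        (ih _ _ (by omega) ⟨by omega, by omega⟩ ⟨by omega, by omega⟩)
    · exact hdiag x ⟨hx0, hxm⟩
    · exact hS.mem_of_adj_pair (Or.inr rfl) (Or.inl rfl)
        (ih _ _ (by omega) ⟨by omega, by omega⟩ ⟨by omega, by omega⟩)
        (ih _ _ (by omega) ⟨by omega, by omega⟩ ⟨by omega, by omega⟩)

theorem SpanClosed.square_subset_of_antidiag {S : Set (ℤ × ℤ)} (hS : SpanClosed Grid S)
    {m : ℤ} (hanti : ∀ i ∈ Icc 0 m, (i, m - i) ∈ S) : Icc 0 m ×ˢ Icc 0 m ⊆ S := by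
  suffices h : ∀ d : ℕ, ∀ x y : ℤ, (x + y - m).natAbs ≤ d → x ∈ Icc 0 m → y ∈ Icc 0 m →
      (x, y) ∈ S from
    fun ⟨x, y⟩ ⟨hx, hy⟩ => h _ x y le_rfl hx hy
  intro d
  induction d with
  | zero =>
    intro x y hxy hx _
    obtain rfl : y = m - x := by omega
    exact hanti x hx
  | succ d ih =>
    rintro x y hxy ⟨hx0, hxm⟩ ⟨hy0, hym⟩
    rcases lt_trichotomy (x + y) m with h | h | h
    · exact hS.mem_of_adj_pair (Or.inl rfl) (Or.inl rfl)
        (ih _ _ (by omega) ⟨by omega, by omega⟩ ⟨by omega, by omega⟩)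
        (ih _ _ (by omega) ⟨by omega, by omega⟩ ⟨by omega, by omega⟩)
    · obtain rfl : y = m - x := by omega
      exact hanti x ⟨hx0, hxm⟩
    · exact hS.mem_of_adj_pair (Or.inr rfl) (Or.inr rfl)
        (ih _ _ (by omega) ⟨by omega, by omega⟩ ⟨by omega, by omega⟩)
        (ih _ _ (by omega) ⟨by omega, by omega⟩ ⟨by omega, by omega⟩)

theorem spanClosed_quadrants (k : ℤ) : SpanClosed Grid (Iio k ×ˢ Iio k ∪ Ioi k ×ˢ Ioi k) :=
  spanClosed_prod.union spanClosed_prod fun p a ⟨ha1, ha2⟩ b ⟨hb1, hb2⟩ hpa hpb => by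
    simp only [mem_Iio, mem_Ioi] at ha1 ha2 hb1 hb2
    rw [grid_adj_iff] at hpa hpb
    omega

end Grid

section Diagonal

def diag (n : ℕ) : Finset (ℤ × ℤ) :=
  (Finset.range n).image fun i : ℕ => ((i : ℤ), (i : ℤ))

def antidiag (n : ℕ) : Finset (ℤ × ℤ) :=
  (Finset.range n).image fun i : ℕ => ((i : ℤ), (n : ℤ) - 1 - (i : ℤ))

theorem mem_diag {n : ℕ} {p : ℤ × ℤ} :
    p ∈ diag n ↔ p.1 ∈ Icc 0 ((n : ℤ) - 1) ∧ p.2 = p.1 := by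
  constructor
  · simp only [diag, Finset.mem_image, Finset.mem_range]
    rintro ⟨i, hi, rfl⟩
    exact ⟨⟨by omega, by omega⟩, rfl⟩
  · rintro ⟨⟨h0, hn⟩, h⟩
    exact Finset.mem_image.2
      ⟨p.1.toNat, Finset.mem_range.2 (by omega), Prod.ext (by simp [h0]) (by simp [h0, h])⟩

theorem mem_antidiag {n : ℕ} {p : ℤ × ℤ} :
    p ∈ antidiag n ↔ p.1 ∈ Icc 0 ((n : ℤ) - 1) ∧ p.2 = (n : ℤ) - 1 - p.1 := by
  constructor
  · simp only [antidiag, Finset.mem_image, Finset.mem_range]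
    rintro ⟨i, hi, rfl⟩
    exact ⟨⟨by omega, by omega⟩, rfl⟩
  · rintro ⟨⟨h0, hn⟩, h⟩
    exact Finset.mem_image.2
      ⟨p.1.toNat, Finset.mem_range.2 (by omega), Prod.ext (by simp [h0]) (by simp [h0, h])⟩

theorem span_diag (n : ℕ) :
    Span Grid ↑(diag n) = Icc (0 : ℤ) ((n : ℤ) - 1) ×ˢ Icc (0 : ℤ) ((n : ℤ) - 1) := by
  refine (span_subset_of_spanClosed ?_ spanClosed_prod).antisymm
    ((spanClosed_span _).square_subset_of_diag fun i hi => subset_span _ (mem_diag.2 ⟨hi, rfl⟩))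
  intro p hp
  obtain ⟨hp1, hp2⟩ := mem_diag.1 hp
  exact ⟨hp1, hp2 ▸ hp1⟩

theorem span_antidiag (n : ℕ) :
    Span Grid ↑(antidiag n) = Icc (0 : ℤ) ((n : ℤ) - 1) ×ˢ Icc (0 : ℤ) ((n : ℤ) - 1) := by
  refine (span_subset_of_spanClosed ?_ spanClosed_prod).antisymm
    ((spanClosed_span _).square_subset_of_antidiag fun i hi =>
      subset_span _ (mem_antidiag.2 ⟨hi, rfl⟩))
  intro p hp
  obtain ⟨⟨h0, hn⟩, hp2⟩ := mem_antidiag.1 hp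
  exact ⟨⟨h0, hn⟩, ⟨by omega, by omega⟩⟩

theorem notMem_span_diag_sdiff {n : ℕ} {q : ℤ × ℤ} (hq : q ∈ diag n) :
    q ∉ Span Grid (↑(diag n) \ {q}) := by
  obtain ⟨-, hq⟩ := mem_diag.1 hq
  have hsub : Span Grid (↑(diag n) \ {q}) ⊆ Iio q.1 ×ˢ Iio q.1 ∪ Ioi q.1 ×ˢ Ioi q.1 := by
    refine span_subset_of_spanClosed ?_ (spanClosed_quadrants q.1)
    rintro p ⟨hp, hpq⟩
    obtain ⟨-, hp⟩ := mem_diag.1 (Finset.mem_coe.1 hp)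
    have : p.1 ≠ q.1 := fun h => hpq (Prod.ext h (by rw [hp, hq, h]))
    simp only [mem_union, mem_prod, mem_Iio, mem_Ioi]
    omega
  intro h
  have hq' := hsub h
  simp only [mem_union, mem_prod, mem_Iio, mem_Ioi] at hq'
  omega

theorem diag_ne_antidiag {n : ℕ} (hn : 2 ≤ n) : diag n ≠ antidiag n := fun h => by
  have h0 : ((0, 0) : ℤ × ℤ) ∈ antidiag n := h ▸ mem_diag.2 ⟨⟨le_rfl, by omega⟩, rfl⟩
  have h0' := (mem_antidiag.1 h0).2
  simp only at h0'
  omega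

end Diagonal

/-- The diagonal of `n ≥ 3` coins is span-minimal, its span is the full `n × n`
square, every valid move strictly changes (reduces) the span, and the anti-diagonal,
which has the same span, is not reachable from it. -/
theorem diagonal_span_minimal (n : ℕ) (hn : 3 ≤ n)
    (D : Finset (ℤ × ℤ)) (hD : D = (Finset.range n).image fun i : ℕ => ((i : ℤ), (i : ℤ)))
    (A : Finset (ℤ × ℤ))
    (hA : A = (Finset.range n).image fun i : ℕ => ((i : ℤ), (n : ℤ) - 1 - (i : ℤ))) :
    Span Grid ↑D = Set.Icc (0 : ℤ) ((n : ℤ) - 1) ×ˢ Set.Icc (0 : ℤ) ((n : ℤ) - 1) ∧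
    (∀ t ∈ D, Span Grid (↑D \ {t}) ≠ Span Grid ↑D) ∧
    (∀ D' : Finset (ℤ × ℤ), ValidMove Grid D D' → Span Grid ↑D' ≠ Span Grid ↑D) ∧
    Span Grid ↑A = Span Grid ↑D ∧
    ¬Reach Grid D A := by
  change D = diag n at hD
  change A = antidiag n at hA
  subst hD hA
  have hmin : ∀ q ∈ diag n, q ∉ Span Grid (↑(diag n) \ {q}) := fun _ => notMem_span_diag_sdiff
  have hspan : Span Grid ↑(antidiag n) = Span Grid ↑(diag n) :=
    (span_antidiag n).trans (span_diag n).symm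
  refine ⟨span_diag n, fun t ht h => hmin t ht (h ▸ subset_span _ ht),
    fun D' hmove h => hmove.not_span_subset hmin h.ge, hspan, fun hreach => ?_⟩
  exact diag_ne_antidiag (by omega) (hreach.eq_of_span_subset hmin hspan.ge)
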